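/- Let A, B, C, a : ℝ → ℝ be smooth and γ ∈ ℝ, and let H(u,y,z) = (1/2)·(A(u)y² + 2B(u)yz + C(u)z²) be a plane-wave metric function. Suppose that for all u: (i) a'''(u)/4 + A'(u)a(u)/2 + A(u)a'(u) − γB(u) = 0; (ii) a'''(u)/4 + C'(u)a(u)/2 + C(u)a'(u) + γB(u) = 0; and (iii) B'(u)a(u) + 2a'(u)B(u) + γ(A(u) − C(u)) = 0. Then the vector field Y = a(u)∂_u + (1/4)a''(u)(y²+z²)∂_v + ((1/2)a'(u)y + γz)∂_y + ((1/2)a'(u)z − γy)∂_z satisfies ℒ_Y g_H = a'(u)·g_H, i.e. Y is a conformal Killing vector of the plane-wave pp-wave metric g_H with conformal factor ψ = a'(u)/2. -/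

import Mathlib

set_option maxHeartbeats 1000000
set_option linter.unnecessarySeqFocus false


/-- Partial derivative ∂_c f at p on ℝ⁴ (coordinates (u,v,y,z) = indices 0,1,2,3). -/
noncomputable def pd (f : (Fin 4 → ℝ) → ℝ) (c : Fin 4) (p : Fin 4 → ℝ) : ℝ :=
  fderiv ℝ f p (Pi.single c 1)

/-- Lie derivative of a bilinear-form-valued map g along the vector field Y:
(ℒ_Y g)_{ij} = Σ_c Y^c ∂_c g_{ij} + Σ_c g_{cj} ∂_i Y^c + Σ_c g_{ic} ∂_j Y^c. -/
noncomputable def lieDeriv (Y : (Fin 4 → ℝ) → (Fin 4 → ℝ))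
    (g : (Fin 4 → ℝ) → Fin 4 → Fin 4 → ℝ) (p : Fin 4 → ℝ) (i j : Fin 4) : ℝ :=
  (∑ c, Y p c * pd (fun q => g q i j) c p)
  + (∑ c, g p c j * pd (fun q => Y q c) i p)
  + (∑ c, g p i c * pd (fun q => Y q c) j p)

/-- The pp-wave metric with metric function H(u,y,z):
ds² = −2 du dv − 2H du² + dy² + dz². -/
noncomputable def ppMetric (H : (Fin 3 → ℝ) → ℝ) (p : Fin 4 → ℝ) : Fin 4 → Fin 4 → ℝ :=
  fun i j =>
    if i = 0 ∧ j = 0 then -2 * H ![p 0, p 2, p 3]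
    else if (i = 0 ∧ j = 1) ∨ (i = 1 ∧ j = 0) then -1
    else if (i = 2 ∧ j = 2) ∨ (i = 3 ∧ j = 3) then 1
    else 0

private lemma pdh' {f : (Fin 4 → ℝ) → ℝ} {D : (Fin 4 → ℝ) →L[ℝ] ℝ} {p : Fin 4 → ℝ} {c : Fin 4}
    (h : HasFDerivAt f D p) : pd f c p = D (Pi.single c 1) := by rw [pd, h.fderiv]

private lemma pd_const' (k : ℝ) (c : Fin 4) (p : Fin 4 → ℝ) : pd (fun _ => k) c p = 0 := by
  simp [pd]

private lemma hproj' (i : Fin 4) (p : Fin 4 → ℝ) :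
    HasFDerivAt (fun q : Fin 4 → ℝ => q i)
      (ContinuousLinearMap.proj (R := ℝ) (φ := fun _ : Fin 4 => ℝ) i) p :=
  (ContinuousLinearMap.proj (R := ℝ) (φ := fun _ : Fin 4 => ℝ) i).hasFDerivAt

private lemma hcomp' {f : ℝ → ℝ} (hf : Differentiable ℝ f) (i : Fin 4) (p : Fin 4 → ℝ) :
    HasFDerivAt (fun q : Fin 4 → ℝ => f (q i))
      (deriv f (p i) • ContinuousLinearMap.proj (R := ℝ) (φ := fun _ : Fin 4 => ℝ) i) p :=
  (hf (p i)).hasDerivAt.comp_hasFDerivAt p (hproj' i p)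

private lemma hpow' (i : Fin 4) (p : Fin 4 → ℝ) :
    HasFDerivAt (fun q : Fin 4 → ℝ => q i ^ 2)
      ((2 * p i) • ContinuousLinearMap.proj (R := ℝ) (φ := fun _ : Fin 4 => ℝ) i) p := by
  have := (hproj' i p).mul (hproj' i p)
  have e : (2 * p i) • ContinuousLinearMap.proj (R := ℝ) (φ := fun _ : Fin 4 => ℝ) i
      = p i • ContinuousLinearMap.proj (R := ℝ) (φ := fun _ : Fin 4 => ℝ) i
        + p i • ContinuousLinearMap.proj (R := ℝ) (φ := fun _ : Fin 4 => ℝ) i := by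
    rw [two_mul, add_smul]
  rw [e]
  have h2 : (fun q : Fin 4 → ℝ => q i ^ 2) = (fun q => q i) * (fun q => q i) := by
    funext q; simp [pow_two]
  rw [h2]; exact this


/-- for the plane wave H = (A(u)y² + 2B(u)yz + C(u)z²)/2, subject to
conditions (i)-(iii), Y = a∂_u + a''(y²+z²)/4·∂_v + (a'y/2 + γz)∂_y + (a'z/2 − γy)∂_z
is a conformal Killing vector of g_H with conformal factor ψ = a'(u)/2. -/
theorem ckv_plane_wave
    (A B C a : ℝ → ℝ) (γ : ℝ)
    (hA : ContDiff ℝ (⊤ : ℕ∞) A) (hB : ContDiff ℝ (⊤ : ℕ∞) B) (hC : ContDiff ℝ (⊤ : ℕ∞) C)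
    (ha : ContDiff ℝ (⊤ : ℕ∞) a)
    (H : (Fin 3 → ℝ) → ℝ)
    (hH : H = fun q => (1 / 2) * (A (q 0) * (q 1) ^ 2 + 2 * B (q 0) * q 1 * q 2
        + C (q 0) * (q 2) ^ 2))
    (h1 : ∀ u, deriv (deriv (deriv a)) u / 4 + deriv A u * a u / 2 + A u * deriv a u
        - γ * B u = 0)
    (h2 : ∀ u, deriv (deriv (deriv a)) u / 4 + deriv C u * a u / 2 + C u * deriv a u
        + γ * B u = 0)
    (h3 : ∀ u, deriv B u * a u + 2 * deriv a u * B u + γ * (A u - C u) = 0)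
    (Y : (Fin 4 → ℝ) → (Fin 4 → ℝ))
    (hY : Y = fun p => ![a (p 0),
        (1 / 4) * deriv (deriv a) (p 0) * ((p 2) ^ 2 + (p 3) ^ 2),
        (1 / 2) * deriv a (p 0) * p 2 + γ * p 3,
        (1 / 2) * deriv a (p 0) * p 3 - γ * p 2]) :
    ∀ p i j, lieDeriv Y (ppMetric H) p i j = deriv a (p 0) * ppMetric H p i j := by
  intro p i j
  have dA := hA.differentiable (by simp)
  have dB := hB.differentiable (by simp)
  have dC := hC.differentiable (by simp)
  have da := ha.differentiable (by simp)
  have ha' : ContDiff ℝ ((⊤ : ℕ∞) : WithTop ℕ∞) a := ha.of_le (by simp)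
  have ha1 := (contDiff_infty_iff_deriv.mp ha').2
  have da1 := ha1.differentiable (by simp)
  have ha2 := (contDiff_infty_iff_deriv.mp ha1).2
  have da2 := ha2.differentiable (by simp)
  have pdG : ∀ c, pd (fun q => -2 * (1 / 2 * (A (q 0) * q 2 ^ 2 + 2 * B (q 0) * q 2 * q 3
        + C (q 0) * q 3 ^ 2))) c p =
      if c = 0 then -(deriv A (p 0) * p 2 ^ 2 + 2 * deriv B (p 0) * p 2 * p 3
          + deriv C (p 0) * p 3 ^ 2)
      else if c = 2 then -(2 * A (p 0) * p 2 + 2 * B (p 0) * p 3)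
      else if c = 3 then -(2 * B (p 0) * p 2 + 2 * C (p 0) * p 3) else 0 := by
    intro c
    have HG := (((((hcomp' dA 0 p).mul (hpow' 2 p)).add
        ((((hcomp' dB 0 p).const_mul 2).mul (hproj' 2 p)).mul (hproj' 3 p))).add
        ((hcomp' dC 0 p).mul (hpow' 3 p))).const_mul (1/2 : ℝ)).const_mul (-2 : ℝ)
    refine (pdh' HG).trans ?_
    fin_cases c <;>
      simp [Pi.single_apply, ContinuousLinearMap.proj_apply, smul_eq_mul] <;> ring
  have pdY0 : ∀ c, pd (fun q => a (q 0)) c p =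
      if c = 0 then deriv a (p 0) else 0 := by
    intro c
    rw [pdh' (hcomp' da 0 p)]
    fin_cases c <;> simp [Pi.single_apply]
  have pdY1 : ∀ c, pd (fun q => 1 / 4 * deriv (deriv a) (q 0) * (q 2 ^ 2 + q 3 ^ 2)) c p =
      if c = 0 then 1 / 4 * deriv (deriv (deriv a)) (p 0) * (p 2 ^ 2 + p 3 ^ 2)
      else if c = 2 then 1 / 2 * deriv (deriv a) (p 0) * p 2
      else if c = 3 then 1 / 2 * deriv (deriv a) (p 0) * p 3 else 0 := by
    intro c
    have HY := ((hcomp' da2 0 p).const_mul (1/4 : ℝ)).mul ((hpow' 2 p).add (hpow' 3 p))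
    refine (pdh' HY).trans ?_
    fin_cases c <;>
      simp [Pi.single_apply, ContinuousLinearMap.proj_apply, smul_eq_mul] <;> ring
  have pdY2 : ∀ c, pd (fun q => 1 / 2 * deriv a (q 0) * q 2 + γ * q 3) c p =
      if c = 0 then 1 / 2 * deriv (deriv a) (p 0) * p 2
      else if c = 2 then 1 / 2 * deriv a (p 0)
      else if c = 3 then γ else 0 := by
    intro c
    have HY := (((hcomp' da1 0 p).const_mul (1/2 : ℝ)).mul (hproj' 2 p)).add
        ((hproj' 3 p).const_mul γ)
    refine (pdh' HY).trans ?_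
    fin_cases c <;>
      simp [Pi.single_apply, ContinuousLinearMap.proj_apply, smul_eq_mul] <;> ring
  have pdY3 : ∀ c, pd (fun q => 1 / 2 * deriv a (q 0) * q 3 - γ * q 2) c p =
      if c = 0 then 1 / 2 * deriv (deriv a) (p 0) * p 3
      else if c = 2 then -γ
      else if c = 3 then 1 / 2 * deriv a (p 0) else 0 := by
    intro c
    have HY := (((hcomp' da1 0 p).const_mul (1/2 : ℝ)).mul (hproj' 3 p)).sub
        ((hproj' 2 p).const_mul γ)
    refine (pdh' HY).trans ?_
    fin_cases c <;>
      simp [Pi.single_apply, ContinuousLinearMap.proj_apply, smul_eq_mul] <;> ring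
  have pdg : ∀ (i j c : Fin 4), pd (fun q => ppMetric H q i j) c p =
      if i = 0 ∧ j = 0 then
        (if c = 0 then -(deriv A (p 0) * p 2 ^ 2 + 2 * deriv B (p 0) * p 2 * p 3
            + deriv C (p 0) * p 3 ^ 2)
        else if c = 2 then -(2 * A (p 0) * p 2 + 2 * B (p 0) * p 3)
        else if c = 3 then -(2 * B (p 0) * p 2 + 2 * C (p 0) * p 3) else 0)
      else 0 := by
    intro i j c
    by_cases hij : i = 0 ∧ j = 0
    · obtain ⟨rfl, rfl⟩ := hij
      rw [if_pos ⟨rfl, rfl⟩]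
      have e : (fun q : Fin 4 → ℝ => ppMetric H q 0 0)
          = fun q => -2 * (1 / 2 * (A (q 0) * q 2 ^ 2 + 2 * B (q 0) * q 2 * q 3
              + C (q 0) * q 3 ^ 2)) := by
        funext q
        rw [ppMetric, if_pos ⟨rfl, rfl⟩, hH]
        simp [Matrix.cons_val_zero, Matrix.cons_val_one, Matrix.head_cons]
      rw [e, pdG]
    · rw [if_neg hij]
      have e : (fun q : Fin 4 → ℝ => ppMetric H q i j)
          = fun _ => (if (i = 0 ∧ j = 1) ∨ (i = 1 ∧ j = 0) then (-1 : ℝ)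
              else if (i = 2 ∧ j = 2) ∨ (i = 3 ∧ j = 3) then 1 else 0) := by
        funext q
        rw [ppMetric, if_neg hij]
      rw [e, pd_const']
  have pdY : ∀ (c' c : Fin 4), pd (fun q => Y q c') c p =
      if c' = 0 then (if c = 0 then deriv a (p 0) else 0)
      else if c' = 1 then
        (if c = 0 then 1 / 4 * deriv (deriv (deriv a)) (p 0) * (p 2 ^ 2 + p 3 ^ 2)
        else if c = 2 then 1 / 2 * deriv (deriv a) (p 0) * p 2
        else if c = 3 then 1 / 2 * deriv (deriv a) (p 0) * p 3 else 0)
      else if c' = 2 then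
        (if c = 0 then 1 / 2 * deriv (deriv a) (p 0) * p 2
        else if c = 2 then 1 / 2 * deriv a (p 0)
        else if c = 3 then γ else 0)
      else
        (if c = 0 then 1 / 2 * deriv (deriv a) (p 0) * p 3
        else if c = 2 then -γ
        else if c = 3 then 1 / 2 * deriv a (p 0) else 0) := by
    have hi4 : ∀ k : Fin 4, k = 0 ∨ k = 1 ∨ k = 2 ∨ k = 3 := by decide
    intro c' c
    rcases hi4 c' with rfl | rfl | rfl | rfl
    · have e : (fun q : Fin 4 → ℝ => Y q 0) = fun q => a (q 0) := by
        funext q; rw [hY]; simp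
      rw [e, pdY0]; rfl
    · have e : (fun q : Fin 4 → ℝ => Y q 1)
          = fun q => 1 / 4 * deriv (deriv a) (q 0) * (q 2 ^ 2 + q 3 ^ 2) := by
        funext q; rw [hY]; simp
      rw [e, pdY1]; rfl
    · have e : (fun q : Fin 4 → ℝ => Y q 2)
          = fun q => 1 / 2 * deriv a (q 0) * q 2 + γ * q 3 := by
        funext q; rw [hY]; simp
      rw [e, pdY2]; rfl
    · have e : (fun q : Fin 4 → ℝ => Y q 3)
          = fun q => 1 / 2 * deriv a (q 0) * q 3 - γ * q 2 := by
        funext q; rw [hY]; simp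
      rw [e, pdY3]; rfl
  have hi4 : ∀ k : Fin 4, k = 0 ∨ k = 1 ∨ k = 2 ∨ k = 3 := by decide
  have hYp : ∀ c : Fin 4, Y p c =
      if c = 0 then a (p 0)
      else if c = 1 then 1 / 4 * deriv (deriv a) (p 0) * (p 2 ^ 2 + p 3 ^ 2)
      else if c = 2 then 1 / 2 * deriv a (p 0) * p 2 + γ * p 3
      else 1 / 2 * deriv a (p 0) * p 3 - γ * p 2 := by
    intro c
    rcases hi4 c with rfl | rfl | rfl | rfl <;> rw [hY] <;> simp
  have hgp : ∀ i j : Fin 4, ppMetric H p i j =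
      if i = 0 ∧ j = 0 then
        -(A (p 0) * p 2 ^ 2 + 2 * B (p 0) * p 2 * p 3 + C (p 0) * p 3 ^ 2)
      else if (i = 0 ∧ j = 1) ∨ (i = 1 ∧ j = 0) then -1
      else if (i = 2 ∧ j = 2) ∨ (i = 3 ∧ j = 3) then 1 else 0 := by
    intro i j
    rw [ppMetric]
    by_cases hij : i = 0 ∧ j = 0
    · rw [if_pos hij, if_pos hij, hH]
      simp only [Matrix.cons_val_zero, Matrix.cons_val_one, Matrix.head_cons,
        Matrix.cons_val_two, Matrix.tail_cons]
      ring
    · rw [if_neg hij, if_neg hij]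
  clear pdG pdY0 pdY1 pdY2 pdY3 hY hH
  rcases hi4 i with rfl | rfl | rfl | rfl <;> rcases hi4 j with rfl | rfl | rfl | rfl <;>
    simp only [lieDeriv, Fin.sum_univ_four, pdg, pdY, hYp, hgp, Fin.reduceEq, and_self,
      and_true, true_and, and_false, false_and, or_self, or_false, false_or, if_true,
      if_false, reduceIte] <;>
    first
    | linear_combination (-2 * p 2 ^ 2) * h1 (p 0) + (-2 * p 3 ^ 2) * h2 (p 0)
        + (-2 * p 2 * p 3) * h3 (p 0)
    | ring
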